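/- Let S = ∂B(q, ε) be a sphere of radius ε in a complete smooth Riemannian manifold, specialized here to ℝⁿ, and let K ⊂ ℝⁿ be a C² submanifold with p ∈ K, a unit tangent vector v ∈ T_pK, a unit normal w ⊥ T_pK, and q = p + ε·w. Suppose the open ball B(q, ε) is disjoint from K. Then the second fundamental form satisfies II_w^K(v,v) ≤ II_w^S(v,v) = 1/ε, i.e. ⟨(d²/ds²)|_{s=0} α(s), w⟩ ≤ 1/ε where α is the geodesic of K with α(0)=p, α'(0)=v. -/

import Mathlib

open scoped RealInnerProductSpace

/-- `K` is a `k`-dimensional embedded `C²` submanifold of `ℝⁿ`. -/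
def IsC2Submanifold {n : ℕ} (k : ℕ) (K : Set (EuclideanSpace ℝ (Fin n))) : Prop :=
  ∀ p ∈ K, ∃ (U : Set (EuclideanSpace ℝ (Fin k))) (V : Set (EuclideanSpace ℝ (Fin n)))
    (φ : EuclideanSpace ℝ (Fin k) → EuclideanSpace ℝ (Fin n)),
      IsOpen U ∧ IsOpen V ∧ p ∈ V ∧ ContDiffOn ℝ 2 φ U ∧ Set.InjOn φ U ∧
      φ '' U = K ∩ V ∧ ∀ x ∈ U, Function.Injective (fderiv ℝ φ x)

/-- `w` is a normal vector to `K` at `p`. -/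
def IsNormalAt {n : ℕ} (K : Set (EuclideanSpace ℝ (Fin n)))
    (p w : EuclideanSpace ℝ (Fin n)) : Prop :=
  ∀ u ∈ tangentConeAt ℝ K p, ⟪u, w⟫ = 0

/-!
Since `α` stays in `K`, it never enters the open ball of radius `ε` about `q = p + ε • w`,
while `α 0 = p` lies on its boundary sphere. Hence `t ↦ ‖α t - q‖²` is minimal at `0`, and its
second derivative there, `2 (⟪α 0 - q, α''(0)⟫ + ‖α'(0)‖²) = 2 (1 - ε ⟪α''(0), w⟫)`,
is nonnegative.
-/

open Filter Topology

theorem IsLocalMin.deriv_deriv_nonneg {f : ℝ → ℝ} {a : ℝ} (hmin : IsLocalMin f a)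
    (hf : ContinuousAt f a) : 0 ≤ deriv (deriv f) a := by
  by_contra! hneg
  have hmax : IsLocalMax f a := isLocalMax_of_deriv_deriv_neg hneg hmin.deriv_eq_zero hf
  have hconst : f =ᶠ[𝓝 a] fun _ => f a := by
    filter_upwards [hmin, hmax] with x hx₁ hx₂ using le_antisymm hx₂ hx₁
  have hderiv : deriv f =ᶠ[𝓝 a] fun _ => 0 := by
    filter_upwards [hconst.eventuallyEq_nhds] with x hx
    rw [hx.deriv_eq, deriv_const]
  rw [hderiv.deriv_eq, deriv_const] at hneg
  exact hneg.false

section InnerProductSpace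

variable {E : Type*} [NormedAddCommGroup E] [InnerProductSpace ℝ E]

theorem deriv_deriv_norm_sub_sq {α : ℝ → E} {q : E} {s : ℝ}
    (hα : ∀ᶠ t in 𝓝 s, DifferentiableAt ℝ α t) (hα' : DifferentiableAt ℝ (deriv α) s) :
    deriv (deriv fun t => ‖α t - q‖ ^ 2) s =
      2 * (⟪α s - q, deriv (deriv α) s⟫ + ‖deriv α s‖ ^ 2) := by
  have hderiv : (deriv fun t => ‖α t - q‖ ^ 2) =ᶠ[𝓝 s] fun t => 2 * ⟪α t - q, deriv α t⟫ := by
    filter_upwards [hα] with t ht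
    exact (ht.hasDerivAt.sub_const q).norm_sq.deriv
  rw [hderiv.deriv_eq, ((hα.self_of_nhds.hasDerivAt.sub_const q).inner ℝ hα'.hasDerivAt).const_mul 2
    |>.deriv, real_inner_self_eq_norm_sq]

theorem inner_deriv_deriv_le_of_isLocalMin_dist {α : ℝ → E} {q : E} {s : ℝ}
    (hmin : IsLocalMin (fun t => dist (α t) q) s)
    (hα : ∀ᶠ t in 𝓝 s, DifferentiableAt ℝ α t) (hα' : DifferentiableAt ℝ (deriv α) s) :
    ⟪q - α s, deriv (deriv α) s⟫ ≤ ‖deriv α s‖ ^ 2 := by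
  have hmin_sq : IsLocalMin (fun t => ‖α t - q‖ ^ 2) s := by
    filter_upwards [hmin] with t ht
    simp only [dist_eq_norm] at ht
    gcongr
  have hcont : ContinuousAt (fun t => ‖α t - q‖ ^ 2) s :=
    ((hα.self_of_nhds.continuousAt.sub continuousAt_const).norm).pow 2
  have hsecond := hmin_sq.deriv_deriv_nonneg hcont
  rw [deriv_deriv_norm_sub_sq hα hα', ← neg_sub q, inner_neg_left] at hsecond
  linarith

end InnerProductSpace

theorem secondFundamentalForm_le_sphere_general {n : ℕ}
    (K : Set (EuclideanSpace ℝ (Fin n)))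
    (p v w : EuclideanSpace ℝ (Fin n)) (ε : ℝ) (hε : 0 < ε)
    (hv : ‖v‖ = 1)
    (hw : ‖w‖ = 1)
    (hdisj : Metric.ball (p + ε • w) ε ∩ K = ∅)
    (α : ℝ → EuclideanSpace ℝ (Fin n))
    (hα : ContDiff ℝ 2 α)
    (hαK : ∀ s, α s ∈ K) (hα0 : α 0 = p) (hα1 : deriv α 0 = v) :
    ⟪deriv (deriv α) 0, w⟫ ≤ 1 / ε := by
  set q := p + ε • w
  have hq : q - α 0 = ε • w := by rw [hα0, add_sub_cancel_left]
  have hdist0 : dist (α 0) q = ε := by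
    rw [dist_comm, dist_eq_norm, hq, norm_smul, hw, Real.norm_of_nonneg hε.le, mul_one]
  have houtside : ∀ t, ε ≤ dist (α t) q := fun t => not_lt.mp fun hball =>
    (Set.eq_empty_iff_forall_notMem.mp hdisj) (α t) ⟨Metric.mem_ball.mpr hball, hαK t⟩
  have hmin : IsLocalMin (fun t => dist (α t) q) 0 :=
    IsMinOn.isLocalMin (s := Set.univ) (fun t _ => hdist0 ▸ houtside t) Filter.univ_mem
  have hcurv := inner_deriv_deriv_le_of_isLocalMin_dist hmin
    (.of_forall (hα.differentiable two_ne_zero)) ((hα.deriv' (n := 1)).differentiable one_ne_zero 0)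
  rw [hq, hα1, hv, real_inner_smul_left, real_inner_comm, one_pow] at hcurv
  rw [le_div_iff₀ hε]
  linarith

/-- **Sphere comparison for the second fundamental form (Proposition 8(i),
Euclidean case).** Let `K ⊂ ℝⁿ` be a `C²` submanifold, `p ∈ K`, `v` a unit tangent
vector and `w` a unit normal vector at `p`, and `q = p + ε·w` with `ε > 0`. If the
open ball `B(q, ε)` is disjoint from `K`, then for the geodesic `α` of `K` with
`α(0) = p`, `α'(0) = v` one has `II_w^K(v,v) = ⟨α''(0), w⟩ ≤ 1/ε = II_w^S(v,v)`,
where `S = ∂B(q, ε)`. -/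
theorem secondFundamentalForm_le_sphere {n k : ℕ}
    (K : Set (EuclideanSpace ℝ (Fin n)))
    (hK : IsC2Submanifold k K)
    (p v w : EuclideanSpace ℝ (Fin n)) (ε : ℝ) (hε : 0 < ε)
    (hp : p ∈ K)
    (hvT : v ∈ tangentConeAt ℝ K p) (hv : ‖v‖ = 1)
    (hwN : IsNormalAt K p w) (hw : ‖w‖ = 1)
    (hdisj : Metric.ball (p + ε • w) ε ∩ K = ∅)
    (α : ℝ → EuclideanSpace ℝ (Fin n))
    (hα : ContDiff ℝ 2 α)
    (hαK : ∀ s, α s ∈ K) (hα0 : α 0 = p) (hα1 : deriv α 0 = v)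
    (hgeo : ∀ s : ℝ, IsNormalAt K (α s) (deriv (deriv α) s)) :
    ⟪deriv (deriv α) 0, w⟫ ≤ 1 / ε :=
  secondFundamentalForm_le_sphere_general K p v w ε hε hv hw hdisj α hα hαK hα0 hα1
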